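/- arXiv:alg-geom/9312010 — 10 statements merged into one kernel-verified Lean document; each statement's English description precedes it below -/
import Mathlib

section
/- Let h be an FDH function with first difference r, h̃(n) = max_{m ≥ n} (h(m) + (n-m)·r(m)), and t(n) the largest maximizer. Then for every n, r(t(n-1)) ≤ h̃(n) - h̃(n-1) ≤ r(t(n)) (interpreting r(+∞) as the rank ρ of h). In particular n ↦ r(t(n)) is nondecreasing, and the function t is nondecreasing. -/
open Finset

/-- First difference `r(n) = h(n) - h(n-1)`. -/
def dr (h : ℤ → ℤ) (n : ℤ) : ℤ := h n - h (n - 1)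

/-- An FDH function: nonnegative, nondecreasing first differences nonnegative,
vanishing for `n ≪ 0`, eventually linear `ρ n + σ` with `ρ ≥ 0`. -/
def IsFDH (h : ℤ → ℤ) : Prop :=
  (∀ n, 0 ≤ h n) ∧ (∀ n, 0 ≤ dr h n) ∧ (∃ N : ℤ, ∀ n ≤ N, h n = 0) ∧
  (∃ ρ σ : ℤ, 0 ≤ ρ ∧ ∃ N : ℤ, ∀ n ≥ N, h n = ρ * n + σ)

/-- Torsion-free: `r(m) ≥ 1` implies `r(n) ≥ 1` for all `n ≥ m`. -/
def TorsionFree (h : ℤ → ℤ) : Prop := ∀ m n : ℤ, m ≤ n → 1 ≤ dr h m → 1 ≤ dr h n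

/-- `ht` is the function `h̃(n) = max_{m ≥ n} (h(m) + (n-m) r(m))`. -/
def TildeSpec (h ht : ℤ → ℤ) : Prop :=
  ∀ n : ℤ, IsGreatest {v : ℤ | ∃ m : ℤ, n ≤ m ∧ v = h m + (n - m) * dr h m} (ht n)

/-- `t n` is the largest maximizer of `m ↦ h(m) + (n-m) r(m)` over `m ≥ n`,
equal to `⊤` when the set of maximizers is unbounded. -/
def TSpec (h ht : ℤ → ℤ) (t : ℤ → WithTop ℤ) : Prop :=
  ∀ n : ℤ,
    (∀ m : ℤ, n ≤ m → ht n = h m + (n - m) * dr h m → (m : WithTop ℤ) ≤ t n) ∧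
    (∀ τ : ℤ, t n = (τ : WithTop ℤ) → n ≤ τ ∧ ht n = h τ + (n - τ) * dr h τ) ∧
    (t n = ⊤ → ∀ M : ℤ, ∃ m : ℤ, M ≤ m ∧ n ≤ m ∧ ht n = h m + (n - m) * dr h m)

/-- Extension of `dr h` to `WithTop`, with value `rho` at `top`. -/
def rext (h : ℤ → ℤ) (ρ : ℤ) : WithTop ℤ → ℤ :=
  fun x => match x with | ⊤ => ρ | (k : ℤ) => dr h k

/-!
Write `T(n, m) = h(m) + (n - m) r(m)` for the value at `n` of the line of slope `r(m)` through
`(m, h(m))`. Moving the evaluation point by one adds the slope: `T(n + 1, m) = T(n, m) + r(m)`.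
Hence a maximizer `m > n` at level `n` gives `h̃(n + 1) - h̃(n) ≥ r(m)`, and any maximizer at level
`n + 1` gives `h̃(n + 1) - h̃(n) ≤ r(m)`; the largest maximizer `t(n)` always exceeds `n`, since
`T(n, n + 1) = h(n) = T(n, n)`, and when `t(n) = ∞` arbitrarily large maximizers, where `r = ρ`, do
the job. This squeezes `h̃(n + 1) - h̃(n)` between `r(t(n))` and `r(t(n + 1))`.

For `t`: beyond `τ = t(n)` the graph of `h` stays above the line of slope `r(τ)` through
`(τ, h(τ))`, and so `r(m) > r(τ)` for every `m > τ`, or else `m` would be a larger maximizer.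
So `t(n) > t(n + 1)` would give `r(t(n)) > r(t(n + 1))`, contradicting the monotonicity of `r ∘ t`.
-/

def tangentValue (h : ℤ → ℤ) (n m : ℤ) : ℤ := h m + (n - m) * dr h m

lemma dr_add_one (h : ℤ → ℤ) (m : ℤ) : dr h (m + 1) = h (m + 1) - h m := by
  simp [dr]

lemma tangentValue_add_one_left (h : ℤ → ℤ) (n m : ℤ) :
    tangentValue h (n + 1) m = tangentValue h n m + dr h m := by
  unfold tangentValue; ring

lemma tangentValue_add_one_right_self (h : ℤ → ℤ) (n : ℤ) :
    tangentValue h n (n + 1) = tangentValue h n n := by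
  unfold tangentValue; rw [dr_add_one]; ring

lemma dr_eq_of_eventually_linear {h : ℤ → ℤ} {ρ σ N : ℤ} (hN : ∀ n ≥ N, h n = ρ * n + σ)
    {m : ℤ} (hm : N < m) : dr h m = ρ := by
  rw [dr, hN m hm.le, hN (m - 1) (by omega)]; ring

lemma exists_gt_dr_eq_rext {h : ℤ → ℤ} {ρ σ : ℤ} (hlin : ∃ N : ℤ, ∀ n ≥ N, h n = ρ * n + σ)
    {k : ℤ} {x : WithTop ℤ} (hx : (k : WithTop ℤ) < x) : ∃ m, k < m ∧ dr h m = rext h ρ x := by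
  cases x with
  | top =>
    obtain ⟨N, hN⟩ := hlin
    exact ⟨max k N + 1, by omega, dr_eq_of_eventually_linear hN (by omega)⟩
  | coe τ => exact ⟨τ, WithTop.coe_lt_coe.mp hx, rfl⟩

variable {h ht : ℤ → ℤ} {t : ℤ → WithTop ℤ}

namespace TildeSpec

variable (hT : TildeSpec h ht)
include hT

lemma tangentValue_le {n m : ℤ} (hm : n ≤ m) : tangentValue h n m ≤ ht n :=
  (hT n).2 ⟨m, hm, rfl⟩

lemma sub_le_dr {n m : ℤ} (hm : n ≤ m) (heq : ht (n + 1) = tangentValue h (n + 1) m) :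
    ht (n + 1) - ht n ≤ dr h m := by
  have hle := hT.tangentValue_le hm
  rw [heq, tangentValue_add_one_left]
  omega

lemma dr_le_sub {n m : ℤ} (hm : n + 1 ≤ m) (heq : ht n = tangentValue h n m) :
    dr h m ≤ ht (n + 1) - ht n := by
  have hle := hT.tangentValue_le hm
  rw [tangentValue_add_one_left] at hle
  omega

end TildeSpec

namespace TSpec

variable (ht' : TSpec h ht t)
include ht'

lemma lt_of_eq_coe {n τ : ℤ} (hτ : t n = τ) : n < τ := by
  obtain ⟨hnτ, heq⟩ := (ht' n).2.1 τ hτ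
  by_contra hτn
  rw [show τ = n by omega] at hτ heq
  have hnext := (ht' n).1 (n + 1) (by omega) (heq.trans (tangentValue_add_one_right_self h n).symm)
  rw [hτ, WithTop.coe_le_coe] at hnext
  omega

lemma exists_maximizer_dr_eq_rext {ρ σ : ℤ} (hlin : ∃ N : ℤ, ∀ n ≥ N, h n = ρ * n + σ) (n : ℤ) :
    ∃ m, n < m ∧ ht n = tangentValue h n m ∧ dr h m = rext h ρ (t n) := by
  cases htn : t n with
  | top =>
    obtain ⟨N, hN⟩ := hlin
    obtain ⟨m, hm, hnm, heq⟩ := (ht' n).2.2 htn (max n N + 1)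
    exact ⟨m, by omega, heq, dr_eq_of_eventually_linear hN (by omega)⟩
  | coe τ => exact ⟨τ, ht'.lt_of_eq_coe htn, ((ht' n).2.1 τ htn).2, rfl⟩

variable (hT : TildeSpec h ht)
include hT

lemma rext_le_sub {ρ σ : ℤ} (hlin : ∃ N : ℤ, ∀ n ≥ N, h n = ρ * n + σ) (n : ℤ) :
    rext h ρ (t n) ≤ ht (n + 1) - ht n := by
  obtain ⟨m, hnm, heq, hdr⟩ := ht'.exists_maximizer_dr_eq_rext hlin n
  exact hdr ▸ hT.dr_le_sub hnm heq

lemma sub_le_rext {ρ σ : ℤ} (hlin : ∃ N : ℤ, ∀ n ≥ N, h n = ρ * n + σ) (n : ℤ) :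
    ht (n + 1) - ht n ≤ rext h ρ (t (n + 1)) := by
  obtain ⟨m, hnm, heq, hdr⟩ := ht'.exists_maximizer_dr_eq_rext hlin (n + 1)
  exact hdr ▸ hT.sub_le_dr (by omega) heq

lemma dr_lt_of_line_le {n τ m : ℤ} (hτ : t n = τ) (hτm : τ ≤ m)
    (hline : h τ + (m - τ) * dr h τ ≤ h m) : dr h τ < dr h (m + 1) := by
  obtain ⟨hnτ, heq⟩ := (ht' n).2.1 τ hτ
  by_contra! hdr
  have hmax : ht n ≤ tangentValue h n (m + 1) := by
    have hslope : (n - m) * dr h τ ≤ (n - m) * dr h (m + 1) :=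
      mul_le_mul_of_nonpos_left hdr (by omega)
    have hstep : h (m + 1) = h m + dr h (m + 1) := by rw [dr_add_one]; ring
    rw [heq, tangentValue, hstep]
    linarith
  have hle := (ht' n).1 (m + 1) (by omega) (le_antisymm hmax (hT.tangentValue_le (by omega)))
  rw [hτ, WithTop.coe_le_coe] at hle
  omega

lemma line_le {n τ : ℤ} (hτ : t n = τ) {m : ℤ} (hτm : τ ≤ m) :
    h τ + (m - τ) * dr h τ ≤ h m := by
  induction m, hτm using Int.leInduction with
  | base => simp
  | succ m hτm ih =>
    have hdr := ht'.dr_lt_of_line_le hT hτ hτm ih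
    rw [dr_add_one] at hdr
    linarith

lemma dr_lt_of_lt {n τ m : ℤ} (hτ : t n = τ) (hτm : τ < m) : dr h τ < dr h m := by
  simpa using ht'.dr_lt_of_line_le hT hτ (m := m - 1) (by omega) (ht'.line_le hT hτ (by omega))

lemma monotone_rext {ρ σ : ℤ} (hlin : ∃ N : ℤ, ∀ n ≥ N, h n = ρ * n + σ) :
    Monotone fun n => rext h ρ (t n) :=
  monotone_int_of_le_succ fun n => (ht'.rext_le_sub hT hlin n).trans (ht'.sub_le_rext hT hlin n)

lemma monotone {ρ σ : ℤ} (hlin : ∃ N : ℤ, ∀ n ≥ N, h n = ρ * n + σ) : Monotone t := by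
  refine monotone_int_of_le_succ fun n => ?_
  cases hsucc : t (n + 1) with
  | top => exact le_top
  | coe τ =>
    by_contra! hlt
    obtain ⟨m, hτm, hm⟩ := exists_gt_dr_eq_rext hlin hlt
    have hrext := ht'.monotone_rext hT hlin (by omega : n ≤ n + 1)
    simp only [hsucc, ← hm] at hrext
    exact (ht'.dr_lt_of_lt hT hsucc hτm).not_ge hrext

end TSpec

theorem tilde_diff_bounds_general (h ht : ℤ → ℤ) (t : ℤ → WithTop ℤ) (ρ σ : ℤ)
    (hlin : ∃ N : ℤ, ∀ n ≥ N, h n = ρ * n + σ)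
    (hT : TildeSpec h ht) (ht' : TSpec h ht t) :
    (∀ n : ℤ, rext h ρ (t (n - 1)) ≤ ht n - ht (n - 1) ∧
      ht n - ht (n - 1) ≤ rext h ρ (t n)) ∧
    Monotone (fun n => rext h ρ (t n)) ∧ Monotone t := by
  refine ⟨fun n => ?_, ht'.monotone_rext hT hlin, ht'.monotone hT hlin⟩
  have hlow := ht'.rext_le_sub hT hlin (n - 1)
  have hupp := ht'.sub_le_rext hT hlin (n - 1)
  rw [sub_add_cancel] at hlow hupp
  exact ⟨hlow, hupp⟩

/-- r(t(n-1)) <= htilde(n) - htilde(n-1) <= r(t(n)) (with r(top)=rho);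
hence r o t and t are nondecreasing. -/
theorem tilde_diff_bounds (h ht : ℤ → ℤ) (t : ℤ → WithTop ℤ) (ρ σ : ℤ)
    (hF : IsFDH h) (hρ : 0 ≤ ρ) (hlin : ∃ N : ℤ, ∀ n ≥ N, h n = ρ * n + σ)
    (hT : TildeSpec h ht) (ht' : TSpec h ht t) :
    (∀ n : ℤ, rext h ρ (t (n - 1)) ≤ ht n - ht (n - 1) ∧
      ht n - ht (n - 1) ≤ rext h ρ (t n)) ∧
    Monotone (fun n => rext h ρ (t n)) ∧ Monotone t :=
  tilde_diff_bounds_general h ht t ρ σ hlin hT ht'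
end

section
/- Let h be an FDH function with first difference r, t(n) the largest maximizer of m ↦ h(m)+(n-m)r(m) over m ≥ n, and let τ₀ < ⋯ < τ_s < τ_{s+1} = ∞ be the distinct values of t. Set ν_i = min{n : t(n) = τ_i}. If ν_i ≤ n < ν_{i+1}, then t(n) = τ_i and h̃(n) = n·r(τ_i) + (h(τ_i) - τ_i·r(τ_i)). Moreover n < ν_i if and only if n·r(τ_{i-1}) + (h(τ_{i-1}) - τ_{i-1}r(τ_{i-1})) > n·r(τ_i) + (h(τ_i) - τ_i·r(τ_i)). -/
open Finset

/-- Helper: from `0 ≤ c * X` with `1 ≤ c`, conclude `0 ≤ X`. -/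
lemma aux_nonneg_of_mul (c X : ℤ) (h1 : 1 ≤ c) (h2 : 0 ≤ c * X) : 0 ≤ X := by
  by_contra hX
  push_neg at hX
  nlinarith [mul_nonneg (by linarith : (0:ℤ) ≤ c - 1) (by linarith : (0:ℤ) ≤ -X)]

/-- Key interpolation lemma: if `τ` is a maximizer of `m ↦ h m + (n-m) r m` over `m ≥ n`,
then on `[n, τ]` the graph of `h` lies below the line through `(τ-1, h(τ-1)), (τ, h τ)`. -/
lemma aux_graph_below (h ht : ℤ → ℤ) (hT : TildeSpec h ht) (n τ : ℤ)
    (hval : ht n = h τ + (n - τ) * dr h τ) :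
    ∀ k, n ≤ k → k ≤ τ → h k ≤ h τ + (k - τ) * dr h τ := by
  suffices H : ∀ j : ℕ, ∀ k : ℤ, k = τ - (j : ℤ) → n ≤ k → h k ≤ h τ + (k - τ) * dr h τ by
    intro k h1 h2
    exact H (τ - k).toNat k (by omega) h1
  intro j
  induction j with
  | zero =>
    intro k hk _
    have hkτ : k = τ := by omega
    subst hkτ
    have : h k + (k - k) * dr h k = h k := by ring
    linarith [this]
  | succ j ih =>
    intro k hk hnk
    have hk1 : k + 1 = τ - (j : ℤ) := by push_cast at hk ⊢; omega
    have h1 : h (k+1) ≤ h τ + ((k+1) - τ) * dr h τ := ih (k+1) hk1 (by omega)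
    have h2 : h (k+1) + (n - (k+1)) * dr h (k+1) ≤ ht n :=
      (hT n).2 ⟨k+1, by omega, rfl⟩
    have hL : h (k+1) + (n - (k+1)) * dr h (k+1)
        = h (k+1) + (n - (k+1)) * (h (k+1) - h k) := by
      unfold dr
      rw [show k + 1 - 1 = k from by ring]
    rw [hL, hval] at h2
    -- linear interpolation identity
    have hid : (k + 1 - n) * ((h τ + (k - τ) * dr h τ) - h k)
        = ((h τ + (n - τ) * dr h τ) - (h (k+1) + (n - (k+1)) * (h (k+1) - h k)))
          + (k - n) * ((h τ + ((k+1) - τ) * dr h τ) - h (k+1)) := by ring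
    have hprod : 0 ≤ (k - n) * ((h τ + ((k+1) - τ) * dr h τ) - h (k+1)) :=
      mul_nonneg (by omega) (by linarith)
    have h3 : 0 ≤ (k + 1 - n) * ((h τ + (k - τ) * dr h τ) - h k) := by
      rw [hid]; linarith
    have := aux_nonneg_of_mul (k + 1 - n) _ (by omega) h3
    linarith

/-- If `τ` is a maximizer at `n` and the value at `n+1` is attained at some
`σ` with `n+1 ≤ σ ≤ τ`, then it is also attained at `τ`. -/
lemma aux_push_step (h ht : ℤ → ℤ) (hT : TildeSpec h ht) (n τ σ : ℤ)
    (hval : ht n = h τ + (n - τ) * dr h τ)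
    (hσ1 : n + 1 ≤ σ) (hστ : σ ≤ τ)
    (hvalσ : ht (n+1) = h σ + ((n+1) - σ) * dr h σ) :
    ht (n+1) = h τ + ((n+1) - τ) * dr h τ := by
  have u1 : h σ + (n - σ) * dr h σ ≤ ht n := (hT n).2 ⟨σ, by omega, rfl⟩
  rw [hval] at u1
  have u2 : h σ ≤ h τ + (σ - τ) * dr h τ :=
    aux_graph_below h ht hT n τ hval σ (by omega) hστ
  have u3 : h τ + ((n+1) - τ) * dr h τ ≤ ht (n+1) := (hT (n+1)).2 ⟨τ, by omega, rfl⟩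
  have hid : (σ - n) * ((h τ + ((n+1) - τ) * dr h τ) - (h σ + ((n+1) - σ) * dr h σ))
      = (σ - n - 1) * ((h τ + (n - τ) * dr h τ) - (h σ + (n - σ) * dr h σ))
        + ((h τ + (σ - τ) * dr h τ) - h σ) := by ring
  have hprod : 0 ≤ (σ - n - 1) * ((h τ + (n - τ) * dr h τ) - (h σ + (n - σ) * dr h σ)) :=
    mul_nonneg (by omega) (by linarith)
  have h3 : 0 ≤ (σ - n) * ((h τ + ((n+1) - τ) * dr h τ) - (h σ + ((n+1) - σ) * dr h σ)) := by
    rw [hid]; linarith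
  have h4 := aux_nonneg_of_mul (σ - n) _ (by omega) h3
  rw [hvalσ] at u3 ⊢
  linarith

/-- `t n = n` is impossible: `m = n+1` attains the same value `h n`. -/
lemma aux_t_ne_self (h ht : ℤ → ℤ) (t : ℤ → WithTop ℤ)
    (ht' : TSpec h ht t) (n τ : ℤ) (hτ : t n = (τ : WithTop ℤ)) : n + 1 ≤ τ := by
  obtain ⟨h1, h2⟩ := (ht' n).2.1 τ hτ
  by_contra hc
  have hτn : τ = n := by omega
  rw [hτn] at h2 hτ
  have e : ht n = h (n + 1) + (n - (n + 1)) * dr h (n + 1) := by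
    unfold dr
    rw [show n + 1 - 1 = n from by ring, h2]
    ring
  have h3 := (ht' n).1 (n + 1) (by omega) e
  rw [hτ] at h3
  exact absurd (WithTop.coe_le_coe.mp h3) (by omega)

/-- The largest-maximizer function `t` is nondecreasing (single step). -/
lemma aux_t_mono_step (h ht : ℤ → ℤ) (t : ℤ → WithTop ℤ)
    (hT : TildeSpec h ht) (ht' : TSpec h ht t) (n : ℤ) : t n ≤ t (n + 1) := by
  rcases eq_or_ne (t (n+1)) ⊤ with htop | hnetop
  · rw [htop]; exact le_top
  · obtain ⟨σ, hσ⟩ := WithTop.ne_top_iff_exists.mp hnetop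
    obtain ⟨hσ1, hσ2⟩ := (ht' (n+1)).2.1 σ hσ.symm
    have hσ1' : n + 1 ≤ σ := by omega
    rcases eq_or_ne (t n) ⊤ with hn | hn
    · exfalso
      obtain ⟨m, hm1, hm2, hm3⟩ := (ht' n).2.2 hn (σ + 1)
      have key := aux_push_step h ht hT n m σ hm3 hσ1' (by omega) hσ2
      have hle := (ht' (n+1)).1 m (by omega) key
      rw [← hσ] at hle
      exact absurd (WithTop.coe_le_coe.mp hle) (by omega)
    · obtain ⟨τ, hτ⟩ := WithTop.ne_top_iff_exists.mp hn
      obtain ⟨hτ1, hτ2⟩ := (ht' n).2.1 τ hτ.symm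
      rw [← hτ, ← hσ]
      by_cases hle : τ ≤ σ
      · exact WithTop.coe_le_coe.mpr hle
      · push_neg at hle
        have key := aux_push_step h ht hT n τ σ hτ2 hσ1' (by omega) hσ2
        have hc := (ht' (n+1)).1 τ (by omega) key
        rw [← hσ] at hc
        exact absurd (WithTop.coe_le_coe.mp hc) (by omega)

/-- The largest-maximizer function `t` is nondecreasing. -/
lemma aux_t_mono (h ht : ℤ → ℤ) (t : ℤ → WithTop ℤ)
    (hT : TildeSpec h ht) (ht' : TSpec h ht t) :
    ∀ a b : ℤ, a ≤ b → t a ≤ t b := by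
  intro a b hab
  have H : ∀ m : ℕ, t a ≤ t (a + (m : ℤ)) := by
    intro m
    induction m with
    | zero => simp
    | succ k ih =>
      have := aux_t_mono_step h ht t hT ht' (a + (k : ℤ))
      have e : a + ((k : ℤ) + 1) = (a + (k : ℤ)) + 1 := by ring
      push_cast
      rw [e]
      exact le_trans ih this
  have hb : b = a + ((b - a).toNat : ℤ) := by omega
  rw [hb]
  exact H _

/-- on the interval nu_i <= n < nu_{i+1} one has t n = tau_i and
htilde(n) = n r(tau_i) + (h(tau_i) - tau_i r(tau_i)); moreover n < nu_i iff
n r(tau_{i-1}) + (h(tau_{i-1}) - tau_{i-1} r(tau_{i-1})) >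
n r(tau_i) + (h(tau_i) - tau_i r(tau_i)). -/
theorem interval_description (h ht : ℤ → ℤ) (t : ℤ → WithTop ℤ)
    (hF : IsFDH h) (hT : TildeSpec h ht) (ht' : TSpec h ht t)
    (τprev τcur : ℤ)
    (hvp : ∃ n : ℤ, t n = (τprev : WithTop ℤ))
    (hvc : ∃ n : ℤ, t n = (τcur : WithTop ℤ))
    (hlt : τprev < τcur)
    (hconsec : ¬ ∃ n : ℤ, (τprev : WithTop ℤ) < t n ∧ t n < (τcur : WithTop ℤ))
    (νi νnext : ℤ)
    (hν : IsLeast {n : ℤ | t n = (τcur : WithTop ℤ)} νi)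
    (hνn : IsLeast {n : ℤ | (τcur : WithTop ℤ) < t n} νnext) :
    (∀ n : ℤ, νi ≤ n → n < νnext →
      t n = (τcur : WithTop ℤ) ∧
      ht n = n * dr h τcur + (h τcur - τcur * dr h τcur)) ∧
    (∀ n : ℤ, n < νi ↔
      n * dr h τcur + (h τcur - τcur * dr h τcur) <
        n * dr h τprev + (h τprev - τprev * dr h τprev)) := by
  have mono := aux_t_mono h ht t hT ht'
  constructor
  · intro n hn1 hn2
    have h1 : (τcur : WithTop ℤ) ≤ t n := hν.1 ▸ mono νi n hn1
    have h2 : ¬ ((τcur : WithTop ℤ) < t n) := fun hc => absurd (hνn.2 hc) (by omega)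
    have heq : t n = (τcur : WithTop ℤ) := le_antisymm (not_lt.mp h2) h1
    refine ⟨heq, ?_⟩
    obtain ⟨_, hval⟩ := (ht' n).2.1 τcur heq
    rw [hval]; ring
  · -- part 2
    -- facts at p = νi - 1
    have hpmono : t (νi - 1) ≤ (τcur : WithTop ℤ) := by
      have := mono (νi - 1) νi (by omega)
      rw [hν.1] at this; exact this
    have hpne : t (νi - 1) ≠ (τcur : WithTop ℤ) := by
      intro hc
      have := hν.2 hc
      omega
    have hpnetop : t (νi - 1) ≠ ⊤ := by
      intro hc
      rw [hc] at hpmono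
      exact WithTop.not_top_le_coe _ hpmono
    obtain ⟨τ, hτ⟩ := WithTop.ne_top_iff_exists.mp hpnetop
    have hτlt : τ < τcur := by
      have := hpmono; rw [← hτ] at this
      rcases lt_or_eq_of_le (WithTop.coe_le_coe.mp this) with hh | hh
      · exact hh
      · exact absurd (by rw [← hτ, hh]) hpne
    -- τ = τprev
    obtain ⟨n₀, hn₀⟩ := hvp
    have hn₀le : n₀ ≤ νi - 1 := by
      by_contra hc
      have := mono νi n₀ (by omega)
      rw [hν.1, hn₀] at this
      exact absurd (WithTop.coe_le_coe.mp this) (by omega)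
    have hτge : τprev ≤ τ := by
      have := mono n₀ (νi - 1) hn₀le
      rw [hn₀, ← hτ] at this
      exact WithTop.coe_le_coe.mp this
    have hττ : τ = τprev := by
      rcases lt_or_eq_of_le hτge with hh | hh
      · exact absurd ⟨νi - 1, by rw [← hτ]; exact_mod_cast WithTop.coe_lt_coe.mpr hh,
          by rw [← hτ]; exact WithTop.coe_lt_coe.mpr hτlt⟩ hconsec
      · exact hh.symm
    subst hττ
    obtain ⟨hp1, hp2⟩ := (ht' (νi - 1)).2.1 τ hτ.symm
    -- νi ≤ τ (= τprev) since t (νi-1) = τ and τ ≥ (νi-1)+1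
    have hνiτ : νi ≤ τ := by
      have := aux_t_ne_self h ht t ht' (νi - 1) τ hτ.symm
      omega
    -- facts at νi
    obtain ⟨hc1, hc2⟩ := (ht' νi).2.1 τcur hν.1
    -- gp ≥ 1 : F τ p > F τcur p
    have hmemp : h τcur + ((νi - 1) - τcur) * dr h τcur ≤ ht (νi - 1) :=
      (hT (νi - 1)).2 ⟨τcur, by omega, rfl⟩
    have hstrict : h τcur + ((νi - 1) - τcur) * dr h τcur ≠ ht (νi - 1) := by
      intro hc
      have := (ht' (νi - 1)).1 τcur (by omega) hc.symm
      rw [hτ.symm] at this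
      exact absurd (WithTop.coe_le_coe.mp this) (by omega)
    have hA : h τcur + ((νi - 1) - τcur) * dr h τcur + 1 ≤ h τ + ((νi - 1) - τ) * dr h τ := by
      rw [hp2] at hmemp hstrict
      exact Int.lt_iff_add_one_le.mp (lt_of_le_of_ne hmemp hstrict)
    -- gi ≤ 0 : F τ νi ≤ F τcur νi
    have hB : h τ + (νi - τ) * dr h τ ≤ h τcur + (νi - τcur) * dr h τcur := by
      have := (hT νi).2 ⟨τ, hνiτ, rfl⟩
      rw [hc2] at this
      exact this
    -- slope comparison
    have hd : dr h τ - dr h τcur ≤ -1 := by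
      have e1 : h τ + (νi - τ) * dr h τ
          = (h τ + ((νi - 1) - τ) * dr h τ) + dr h τ := by ring
      have e2 : h τcur + (νi - τcur) * dr h τcur
          = (h τcur + ((νi - 1) - τcur) * dr h τcur) + dr h τcur := by ring
      linarith [hA, hB, e1.le, e1.ge, e2.le, e2.ge]
    intro n
    constructor
    · intro hn
      have hprod : 0 ≤ (νi - 1 - n) * (dr h τcur - dr h τ) :=
        mul_nonneg (by omega) (by linarith)
      nlinarith [hA, hprod]
    · intro hgn
      by_contra hc
      push_neg at hc
      have hprod : 0 ≤ (n - νi) * (dr h τcur - dr h τ) :=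
        mul_nonneg (by omega) (by linarith)
      nlinarith [hB, hprod]
end

section
/- Let h be an FDH function with first difference r, t the associated maximizer function, τ_i its distinct values and ν_i = min{n : t(n) = τ_i}. If ν_i ≤ n ≤ m ≤ τ_i, then h(τ_i) + (n - τ_i)·r(τ_i) ≥ h(m) + (n - m)·r(m). -/
open Finset

/-- if nu_i <= n <= m <= tau_i then
h(tau_i) + (n - tau_i) r(tau_i) >= h(m) + (n - m) r(m). -/
theorem interval_ineq (h ht : ℤ → ℤ) (t : ℤ → WithTop ℤ)
    (hF : IsFDH h) (hT : TildeSpec h ht) (ht' : TSpec h ht t)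
    (τi νi : ℤ) (hv : ∃ n : ℤ, t n = (τi : WithTop ℤ))
    (hν : IsLeast {n : ℤ | t n = (τi : WithTop ℤ)} νi) :
    ∀ n m : ℤ, νi ≤ n → n ≤ m → m ≤ τi →
      h m + (n - m) * dr h m ≤ h τi + (n - τi) * dr h τi := by
  obtain ⟨hνmem, -⟩ := hν
  obtain ⟨hle, heq⟩ := (ht' νi).2.1 τi hνmem
  -- key: τi maximizes m ↦ h m + (νi - m) r m over m ≥ νi
  have key : ∀ k : ℤ, νi ≤ k →
      h k + (νi - k) * dr h k ≤ h τi + (νi - τi) * dr h τi := by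
    intro k hk
    have hub := (hT νi).2 ⟨k, hk, rfl⟩
    rw [heq] at hub
    exact hub
  -- crux: for νi ≤ m ≤ τi, h m ≤ h τi + (m - τi) r τi
  have crux0 : ∀ j : ℕ, ∀ m : ℤ, νi ≤ m → m + (j : ℤ) = τi →
      h m ≤ h τi + (m - τi) * dr h τi := by
    intro j
    induction j with
    | zero =>
      intro m _ hm
      have : m = τi := by exact_mod_cast by simpa using hm
      subst this; simp
    | succ j ih =>
      intro m hm hmj
      have h1 : νi ≤ m + 1 := by omega
      have h2 : (m + 1) + (j : ℤ) = τi := by push_cast at hmj ⊢; omega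
      have ih' := ih (m + 1) h1 h2
      have hk := key (m + 1) h1
      have e : dr h (m + 1) = h (m + 1) - h m := by
        have : m + 1 - 1 = m := by ring
        rw [dr, this]
      rcases le_or_gt (dr h (m + 1)) (dr h τi) with hc | hc
      · have aux := mul_le_mul_of_nonneg_left hc (show (0:ℤ) ≤ m - νi by omega)
        nlinarith [hk, aux, e]
      · nlinarith [ih', hc, e]
  have crux : ∀ m : ℤ, νi ≤ m → m ≤ τi → h m ≤ h τi + (m - τi) * dr h τi := by
    intro m hm1 hm2
    exact crux0 (τi - m).toNat m hm1 (by
      rw [Int.toNat_of_nonneg (by omega)]; ring)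
  intro n m hn hnm hmτ
  rcases le_or_gt (dr h m) (dr h τi) with hc | hc
  · have km := key m (by omega)
    have aux := mul_le_mul_of_nonneg_left hc (show (0:ℤ) ≤ n - νi by omega)
    nlinarith [km, aux]
  · have hcr := crux m (by omega) hmτ
    have aux := mul_le_mul_of_nonpos_left hc.le (show (n - m : ℤ) ≤ 0 by omega)
    nlinarith [hcr, aux]
end

section
/- Let h be a torsion-free FDH function (i.e. r(m) ≥ 1 implies r(n) ≥ 1 for all n ≥ m, where r = Δh), and let t(n) be the largest maximizer of m ↦ h(m)+(n-m)r(m) over m ≥ n, with ν₁ = min{n : t(n) = τ₁} where τ₁ is the second-smallest value of t. Then for n < ν₁ one has h̃(n) = 0 and t(n) = max{m : h(m) = 0}. -/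
open Finset

/-- Key monotonicity lemma: if `α` is a maximizer at `p`, `t q = β` with `p < q`
and `β < α`, we get a contradiction. -/
lemma key_mono (h ht : ℤ → ℤ) (t : ℤ → WithTop ℤ)
    (hT : TildeSpec h ht) (ht' : TSpec h ht t)
    (p q α β : ℤ) (hpq : p < q) (hβ : t q = (β : WithTop ℤ)) (hpα : p ≤ α)
    (hmax : ht p = h α + (p - α) * dr h α) (hβα : β < α) : False := by
  obtain ⟨hqβ, hEq⟩ := (ht' q).2.1 β hβ
  -- strict dominance of β at q
  have Hdom : ∀ j : ℤ, β < j → h j + (q - j) * dr h j ≤ ht q - 1 := by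
    intro j hj
    have hqj : q ≤ j := le_trans hqβ (le_of_lt hj)
    have hle : h j + (q - j) * dr h j ≤ ht q := (hT q).2 ⟨j, hqj, rfl⟩
    rcases lt_or_eq_of_le hle with hlt | heq
    · omega
    · exfalso
      have hmem := (ht' q).1 j hqj heq.symm
      rw [hβ] at hmem
      exact absurd (WithTop.coe_le_coe.mp hmem) (not_le.mpr hj)
  -- cumulative growth: h k - h β ≥ (k - β) * (r β + 1) for k ≥ β
  have QN : ∀ d : ℕ, ((β + (d : ℤ)) - β) * (dr h β + 1) ≤ h (β + (d : ℤ)) - h β := by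
    intro d
    induction d with
    | zero => simp
    | succ d IH =>
      set k := β + (d : ℤ) with hkdef
      have hk : β ≤ k := by omega
      have hsucc : β + ((d + 1 : ℕ) : ℤ) = k + 1 := by push_cast; ring
      rw [hsucc]
      have Hd := Hdom (k + 1) (by omega)
      rw [hEq] at Hd
      have E1 : dr h (k + 1) = h (k + 1) - h k := by
        have e : k + 1 - 1 = k := by ring
        simp only [dr, e]
      rw [E1] at Hd
      have hrk : dr h β + 1 ≤ h (k + 1) - h k := by
        by_contra hc
        push_neg at hc
        have hq' : (0 : ℤ) ≤ k - q := by omega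
        have hp1 : (k - q) * ((h (k + 1) - h k) - dr h β) ≤ 0 :=
          mul_nonpos_of_nonneg_of_nonpos hq' (by linarith)
        nlinarith [IH, Hd, hp1, show (0:ℤ) ≤ k - β from by omega]
      nlinarith [IH, hrk]
  have Q : ∀ k : ℤ, β ≤ k → (k - β) * (dr h β + 1) ≤ h k - h β := by
    intro k hk
    have h1 : β + ((k - β).toNat : ℤ) = k := by omega
    have := QN (k - β).toNat
    rw [h1] at this
    exact this
  -- extract r α ≥ r β + 1
  have Hdα := Hdom α hβα
  rw [hEq] at Hdα
  have E1α : dr h α = h α - h (α - 1) := rfl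
  have Qa := Q (α - 1) (by omega)
  have hrα : dr h β + 1 ≤ dr h α := by
    by_contra hc
    push_neg at hc
    have hq' : (0 : ℤ) ≤ (α - 1) - q := by omega
    have hp1 : ((α - 1) - q) * (dr h α - dr h β) ≤ 0 :=
      mul_nonpos_of_nonneg_of_nonpos hq' (by linarith)
    nlinarith [Hdα, hp1, Qa, E1α, show (0:ℤ) ≤ α - 1 - β from by omega]
  -- exchange between p and q
  have LBp : h β + (p - β) * dr h β ≤ ht p := (hT p).2 ⟨β, by omega, rfl⟩
  rw [hmax] at LBp
  have hprod : 0 < (q - p) * (dr h α - dr h β) :=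
    mul_pos (by omega) (by linarith)
  nlinarith [LBp, Hdα, hprod]

/-- for torsion-free h and n < nu_1, htilde(n) = 0 and
t(n) = max { m : h(m) = 0 }. -/
theorem below_nu_one (h ht : ℤ → ℤ) (t : ℤ → WithTop ℤ)
    (hF : IsFDH h) (hTF : TorsionFree h) (hT : TildeSpec h ht) (ht' : TSpec h ht t)
    (τ0 τ1 : ℤ)
    (hv0 : ∃ n : ℤ, t n = (τ0 : WithTop ℤ))
    (hv1 : ∃ n : ℤ, t n = (τ1 : WithTop ℤ))
    (hlt : τ0 < τ1)
    (hsecond : ∀ n : ℤ, t n = (τ0 : WithTop ℤ) ∨ (τ1 : WithTop ℤ) ≤ t n)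
    (ν1 : ℤ) (hν : IsLeast {n : ℤ | t n = (τ1 : WithTop ℤ)} ν1) :
    ∀ n : ℤ, n < ν1 → ht n = 0 ∧
      ∃ τ : ℤ, t n = (τ : WithTop ℤ) ∧ IsGreatest {m : ℤ | h m = 0} τ := by
  obtain ⟨hpos, hdr, ⟨N, hN⟩, -⟩ := hF
  obtain ⟨n0, hn0⟩ := hv0
  obtain ⟨hn0τ0, E0⟩ := (ht' n0).2.1 τ0 hn0
  -- downward closure: t n = τ0 for all n ≤ n0
  have down : ∀ d : ℕ, t (n0 - (d : ℤ)) = (τ0 : WithTop ℤ) := by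
    intro d
    induction d with
    | zero => simpa using hn0
    | succ d IH =>
      have hq : n0 - ((d + 1 : ℕ) : ℤ) = (n0 - (d : ℤ)) - 1 := by push_cast; ring
      rw [hq]
      set q := n0 - (d : ℤ) with hqdef
      rcases hsecond (q - 1) with h0 | h1
      · exact h0
      · exfalso
        have hqτ0 : q ≤ τ0 := ((ht' q).2.1 τ0 IH).1
        by_cases htop : t (q - 1) = ⊤
        · obtain ⟨α, hMα, hpα, hmaxα⟩ := (ht' (q - 1)).2.2 htop (τ0 + 1)
          exact key_mono h ht t hT ht' (q - 1) q α τ0 (by omega) IH hpα hmaxα (by omega)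
        · obtain ⟨τ, hτ⟩ := WithTop.ne_top_iff_exists.mp htop
          obtain ⟨hle1, hmax1⟩ := (ht' (q - 1)).2.1 τ hτ.symm
          have hττ1 : τ1 ≤ τ := by
            rw [← hτ] at h1; exact_mod_cast h1
          exact key_mono h ht t hT ht' (q - 1) q τ τ0 (by omega) IH hle1 hmax1 (by omega)
  have tlow : ∀ n : ℤ, n ≤ n0 → t n = (τ0 : WithTop ℤ) := by
    intro n hn
    have h1 : n0 - ((n0 - n).toNat : ℤ) = n := by omega
    rw [← h1]; exact down _
  -- r τ0 = 0
  set nstar := min N (min n0 (τ0 - h τ0 - 1)) with hnstar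
  have hs1 : nstar ≤ N := min_le_left _ _
  have hs2 : nstar ≤ n0 := le_trans (min_le_right _ _) (min_le_left _ _)
  have hs3 : nstar ≤ τ0 - h τ0 - 1 := le_trans (min_le_right _ _) (min_le_right _ _)
  have htstar : ht nstar = h τ0 + (nstar - τ0) * dr h τ0 :=
    ((ht' nstar).2.1 τ0 (tlow nstar hs2)).2
  have lb1 : 0 ≤ ht nstar := by
    have lb0 : h nstar + (nstar - nstar) * dr h nstar ≤ ht nstar :=
      (hT nstar).2 ⟨nstar, le_refl _, rfl⟩
    rw [hN nstar hs1] at lb0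
    simpa using lb0
  have hr0 : dr h τ0 = 0 := by
    by_contra hcon
    have h1 : 1 ≤ dr h τ0 := by have := hdr τ0; omega
    have hmul : (τ0 - nstar) * 1 ≤ (τ0 - nstar) * dr h τ0 :=
      mul_le_mul_of_nonneg_left h1 (by omega)
    nlinarith [htstar, lb1, hs3, hpos τ0, hmul]
  -- h τ0 = 0
  have hrall : ∀ m : ℤ, m ≤ τ0 → dr h m = 0 := by
    intro m hm
    by_contra hcon
    have h1 : 1 ≤ dr h m := by have := hdr m; omega
    have := hTF m τ0 hm h1
    omega
  have hconst : ∀ d : ℕ, h (τ0 - (d : ℤ)) = h τ0 := by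
    intro d
    induction d with
    | zero => simp
    | succ d IH =>
      have e : τ0 - ((d + 1 : ℕ) : ℤ) = τ0 - (d : ℤ) - 1 := by push_cast; ring
      have hz := hrall (τ0 - (d : ℤ)) (by omega)
      simp only [dr] at hz
      rw [e]
      omega
  have hτ00 : h τ0 = 0 := by
    set N0 := min N τ0 with hN0
    have hN01 : N0 ≤ N := min_le_left _ _
    have hN02 : N0 ≤ τ0 := min_le_right _ _
    have hc := hconst (τ0 - N0).toNat
    have heq : τ0 - ((τ0 - N0).toNat : ℤ) = N0 := by omega
    rw [heq] at hc
    rw [← hc]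
    exact hN _ hN01
  -- τ0 = max { m : h m = 0 }
  have hgreat : IsGreatest {m : ℤ | h m = 0} τ0 := by
    constructor
    · exact hτ00
    · intro m hm
      by_contra hgt
      push_neg at hgt
      have hm0 : h m = 0 := hm
      have hdm := hdr m
      simp only [dr] at hdm
      have hm1 : h (m - 1) = 0 := by have := hpos (m - 1); omega
      have hdm0 : dr h m = 0 := by simp only [dr]; omega
      have hEq0 : ht n0 = h m + (n0 - m) * dr h m := by
        rw [E0, hτ00, hr0, hm0, hdm0]; ring
      have hmem := (ht' n0).1 m (by omega) hEq0
      rw [hn0] at hmem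
      exact absurd (WithTop.coe_le_coe.mp hmem) (by omega)
  -- main
  intro n hn
  rcases hsecond n with h0 | h1
  · obtain ⟨hnτ0, En⟩ := (ht' n).2.1 τ0 h0
    refine ⟨by rw [En, hτ00, hr0]; ring, τ0, h0, hgreat⟩
  · exfalso
    have hν1mem : t ν1 = (τ1 : WithTop ℤ) := hν.1
    by_cases htop : t n = ⊤
    · obtain ⟨α, hMα, hnα, hmaxα⟩ := (ht' n).2.2 htop (τ1 + 1)
      exact key_mono h ht t hT ht' n ν1 α τ1 hn hν1mem hnα hmaxα (by omega)
    · obtain ⟨τ, hτ⟩ := WithTop.ne_top_iff_exists.mp htop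
      obtain ⟨hle1, hmax1⟩ := (ht' n).2.1 τ hτ.symm
      have hττ1 : τ1 ≤ τ := by rw [← hτ] at h1; exact_mod_cast h1
      rcases eq_or_lt_of_le hττ1 with he | hl
      · have hmem : n ∈ {x : ℤ | t x = (τ1 : WithTop ℤ)} := by
          show t n = (τ1 : WithTop ℤ)
          rw [← hτ, ← he]
        exact absurd (hν.2 hmem) (by omega)
      · exact key_mono h ht t hT ht' n ν1 τ τ1 hn hν1mem hle1 hmax1 hl
end

section
/- Let h be an FDH function with r = Δh, and suppose h is filterable at an integer m, meaning r(n) ≥ r(m) for all n ≥ m. Define H(n) = h(m) + (n-m)·r(m), and the pieces h^sub(n) = h(n) for n ≤ m and H(n) for n > m, and h^quot(n) = 0 for n ≤ m and h(n) - H(n) for n > m. Then h^sub and h^quot are both FDH functions, and h = h^sub + h^quot. -/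
open Finset

/-- if h is filterable at m, the sub and quotient pieces are FDH
functions summing to h. -/
theorem filterable_pieces (h : ℤ → ℤ) (hF : IsFDH h) (m : ℤ)
    (hfil : ∀ n : ℤ, m ≤ n → dr h m ≤ dr h n) :
    IsFDH (fun n => if n ≤ m then h n else h m + (n - m) * dr h m) ∧
    IsFDH (fun n => h n - (if n ≤ m then h n else h m + (n - m) * dr h m)) ∧
    (∀ n : ℤ, h n = (if n ≤ m then h n else h m + (n - m) * dr h m) +
      (h n - (if n ≤ m then h n else h m + (n - m) * dr h m))) := by
  obtain ⟨hpos, hdr, ⟨N0, hN0⟩, ρ, σ, hρ, N1, hN1⟩ := hF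
  -- key growth lemma
  have hkey : ∀ n : ℤ, m ≤ n → h m + (n - m) * dr h m ≤ h n := by
    refine Int.le_induction ?_ ?_
    · simp
    · intro n hn ih
      have h1 : dr h m ≤ dr h (n + 1) := hfil (n + 1) (by omega)
      have h2 : dr h (n + 1) = h (n + 1) - h n := by simp [dr]
      nlinarith
  -- ρ dominates dr h m
  have hρge : dr h m ≤ ρ := by
    set n : ℤ := max N1 m + 1 with hn
    have e1 : h n = ρ * n + σ := hN1 n (by omega)
    have e2 : h (n - 1) = ρ * (n - 1) + σ := hN1 (n - 1) (by omega)
    have : dr h n = ρ := by simp [dr, e1, e2]; ring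
    have := hfil n (by omega)
    omega
  have hdr' : ∀ n, 0 ≤ h n - h (n - 1) := fun n => hdr n
  have hfil' : ∀ n : ℤ, m ≤ n → h m - h (m - 1) ≤ h n - h (n - 1) := hfil
  refine ⟨⟨?_, ?_, ?_, ?_⟩, ⟨?_, ?_, ?_, ?_⟩, ?_⟩
  · intro n
    dsimp only
    by_cases h1 : n ≤ m
    · simpa [h1] using hpos n
    · rw [if_neg h1]
      have : (0:ℤ) ≤ (n - m) * dr h m := mul_nonneg (by omega) (hdr m)
      linarith [hpos m]
  · intro n
    simp only [dr]
    by_cases h1 : n ≤ m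
    · rw [if_pos h1, if_pos (by omega : n - 1 ≤ m)]
      exact hdr' n
    · by_cases h2 : n - 1 ≤ m
      · have e : n - 1 = m := by omega
        rw [if_neg h1, if_pos h2, e]
        have hnm : n - m = 1 := by omega
        rw [hnm]
        linarith [hdr' m]
      · rw [if_neg h1, if_neg h2]
        nlinarith [hdr' m]
  · exact ⟨min N0 m, fun n hn => by dsimp only; rw [if_pos (by omega)]; exact hN0 n (by omega)⟩
  · exact ⟨dr h m, h m - m * dr h m, hdr m, m + 1, fun n hn => by
      dsimp only; rw [if_neg (by omega)]; ring⟩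
  · intro n
    dsimp only
    by_cases h1 : n ≤ m
    · simp [h1]
    · rw [if_neg h1]
      linarith [hkey n (by omega)]
  · intro n
    simp only [dr]
    by_cases h1 : n ≤ m
    · rw [if_pos h1, if_pos (by omega : n - 1 ≤ m)]; simp
    · by_cases h2 : n - 1 ≤ m
      · have e : n - 1 = m := by omega
        rw [if_neg h1, if_pos h2, e]
        have hnm : n - m = 1 := by omega
        rw [hnm]
        have := hfil' n (by omega)
        rw [e] at this
        linarith
      · rw [if_neg h1, if_neg h2]
        have := hfil' n (by omega)
        nlinarith [this]
  · exact ⟨m, fun n hn => by dsimp only; rw [if_pos hn]; ring⟩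
  · refine ⟨ρ - dr h m, σ - h m + m * dr h m, by omega, max N1 (m + 1), fun n hn => ?_⟩
    dsimp only
    rw [if_neg (by omega : ¬ n ≤ m), hN1 n (le_trans (le_max_left _ _) hn)]
    ring
  · intro n; ring
end

section
/- Let h be an FDH function and let τ₀ < τ₁ < ⋯ < τ_s be the distinct finite values of the function t(n) = max{m ≥ n : h̃(n) = h(m)+(n-m)r(m)}. Then h is filterable at each τ_i, i.e. r(n) ≥ r(τ_i) for all n ≥ τ_i. -/
open Finset

/-- h is filterable at each finite value tau of t. -/
theorem filterable_at_tau (h ht : ℤ → ℤ) (t : ℤ → WithTop ℤ)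
    (hF : IsFDH h) (hT : TildeSpec h ht) (ht' : TSpec h ht t) :
    ∀ τ : ℤ, (∃ n : ℤ, t n = (τ : WithTop ℤ)) → ∀ n : ℤ, τ ≤ n → dr h τ ≤ dr h n := by
  rintro τ ⟨n, hn⟩ n' hn'
  obtain ⟨-, hmax⟩ := hT n
  obtain ⟨hlargest, hval, -⟩ := ht' n
  obtain ⟨hnτ, heq⟩ := hval τ hn
  have hstrict : ∀ m : ℤ, τ < m → h m + (n - m) * dr h m < ht n := by
    intro m hm
    have h1 : h m + (n - m) * dr h m ≤ ht n := hmax ⟨m, by omega, rfl⟩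
    rcases lt_or_eq_of_le h1 with h2 | h2
    · exact h2
    · exfalso
      have h3 := hlargest m (by omega) h2.symm
      rw [hn] at h3
      exact absurd (WithTop.coe_le_coe.mp h3) (by omega)
  have key : ∀ d : ℕ, dr h τ ≤ dr h (τ + (d : ℤ)) ∧
      h τ + (d : ℤ) * dr h τ ≤ h (τ + (d : ℤ)) := by
    intro d
    induction d with
    | zero => simp
    | succ d ih =>
      obtain ⟨ihr, ihh⟩ := ih
      set m : ℤ := τ + (d : ℤ) + 1 with hmdef
      have hcast : τ + ((d + 1 : ℕ) : ℤ) = m := by push_cast; ring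
      rw [hcast]
      have hhd : h (τ + (d : ℤ)) = h m - dr h m := by
        have : m - 1 = τ + (d : ℤ) := by ring
        unfold dr
        rw [this]
        ring
      have hr : dr h τ ≤ dr h m := by
        by_contra hc
        push_neg at hc
        have hs := hstrict m (by omega)
        rw [heq] at hs
        rw [hhd] at ihh
        have ha : n - m + 1 ≤ 0 := by omega
        have hrw : n - τ = n - m + 1 + (d : ℤ) := by omega
        rw [hrw] at hs
        linarith [mul_nonneg (neg_nonneg.mpr ha) (sub_nonneg.mpr hc.le)]
      refine ⟨hr, ?_⟩
      rw [hhd] at ihh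
      push_cast
      linarith
  have hd : n' = τ + ((n' - τ).toNat : ℤ) := by omega
  rw [hd]
  exact (key (n' - τ).toNat).1
end

section
/- Let h be an FDH function, τ₀ < ⋯ < τ_s the distinct finite values of t (the maximizer function), and h₀, h₁, …, h_{s+1} the graded pieces of the filtration of h at τ₀, …, τ_s, given explicitly by h_i(n) = 0 for n ≤ τ_{i-1}, h(n) - H_{i-1}(n) for τ_{i-1} < n ≤ τ_i, and H_i(n) - H_{i-1}(n) for n > τ_i, where H_i(n) := h(τ_i) + (n-τ_i)r(τ_i) (with τ_{-1} = -∞, τ_{s+1} = +∞). Then h₀ is a torsion FDH function (rank 0), and it vanishes identically if h is torsion-free. -/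
open Finset

lemma fdh_mono (h : ℤ → ℤ) (hdr : ∀ n, 0 ≤ dr h n) :
    ∀ m n : ℤ, m ≤ n → h m ≤ h n := by
  have key : ∀ k : ℕ, ∀ m : ℤ, h m ≤ h (m + k) := by
    intro k
    induction k with
    | zero => simp
    | succ k ih =>
      intro m
      have h1 := ih m
      have h2 := hdr (m + k + 1)
      simp only [dr] at h2
      have h4 : (m : ℤ) + ((k : ℤ) + 1) = (m + k) + 1 := by ring
      have h3 : (m + (k : ℤ)) + 1 - 1 = m + k := by ring
      rw [h3] at h2
      push_cast
      rw [h4]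
      omega
  intro m n hmn
  have h5 : n = m + ((n - m).toNat : ℤ) := by omega
  rw [h5]
  exact key _ m

/-- Key lemma: the first difference vanishes at `τ0`. -/
lemma r_tau0_zero (h ht : ℤ → ℤ) (t : ℤ → WithTop ℤ)
    (hF : IsFDH h) (hT : TildeSpec h ht) (ht' : TSpec h ht t)
    (τ0 : ℤ) (hv0 : ∃ n : ℤ, t n = (τ0 : WithTop ℤ))
    (hmin : ∀ τ : ℤ, (∃ n : ℤ, t n = (τ : WithTop ℤ)) → τ0 ≤ τ) :
    dr h τ0 = 0 := by
  obtain ⟨hpos, hdr, ⟨N, hN⟩, ⟨ρ, σ, hρ, N₁, hlin⟩⟩ := hF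
  have hmono := fdh_mono h hdr
  obtain ⟨ns, hns⟩ := hv0
  obtain ⟨hns_le, hns_eq⟩ := (ht' ns).2.1 τ0 hns
  have hdrN : ∀ m : ℤ, m ≤ N → dr h m = 0 := by
    intro m hm
    simp only [dr]
    rw [hN m hm, hN (m - 1) (by omega)]
    ring
  -- ρ ≥ 1 (otherwise t is identically ⊤, contradicting `hns`)
  have hρ1 : 1 ≤ ρ := by
    by_contra hc
    have hρ0 : ρ = 0 := by omega
    have hconst : ∀ n : ℤ, N₁ ≤ n → h n = σ := by
      intro n hn; have := hlin n hn; rw [hρ0] at this; omega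
    have hub : ∀ m : ℤ, h m ≤ σ := by
      intro m
      calc h m ≤ h (max m N₁) := hmono _ _ (le_max_left _ _)
        _ = σ := hconst _ (le_max_right _ _)
    set m := max (τ0 + 1) (max ns (N₁ + 1)) with hm_def
    have hm1 : N₁ + 1 ≤ m := le_trans (le_max_right _ _) (le_max_right _ _)
    have hm2 : ns ≤ m := le_trans (le_max_left _ _) (le_max_right _ _)
    have hm3 : τ0 + 1 ≤ m := le_max_left _ _
    have hdrm : dr h m = 0 := by
      simp only [dr]
      rw [hconst m (by omega), hconst (m - 1) (by omega)]; ring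
    have hle : ht ns ≤ σ := by
      obtain ⟨m', hm', hv⟩ := (hT ns).1
      have h1 : (ns - m') * dr h m' ≤ 0 :=
        mul_nonpos_of_nonpos_of_nonneg (by omega) (hdr m')
      have := hub m'
      omega
    have hge : σ ≤ ht ns := by
      have := (hT ns).2 ⟨m, hm2, rfl⟩
      rw [hconst m (by omega), hdrm] at this
      omega
    have hmax : ht ns = h m + (ns - m) * dr h m := by
      rw [hconst m (by omega), hdrm]; omega
    have hcmp := (ht' ns).1 m hm2 hmax
    rw [hns] at hcmp
    have : m ≤ τ0 := WithTop.coe_le_coe.mp hcmp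
    omega
  -- choose n0 very negative
  set n0 : ℤ := min (min ns N) (min (N - h N₁) (min (-σ - 1) (-1))) with hn0_def
  have hn0a : n0 ≤ ns := le_trans (min_le_left _ _) (min_le_left _ _)
  have hn0b : n0 ≤ N := le_trans (min_le_left _ _) (min_le_right _ _)
  have hn0c : n0 ≤ N - h N₁ := le_trans (min_le_right _ _) (min_le_left _ _)
  have hn0d : n0 ≤ -σ - 1 :=
    le_trans (min_le_right _ _) (le_trans (min_le_right _ _) (min_le_left _ _))
  have hn0e : n0 ≤ -1 :=
    le_trans (min_le_right _ _) (le_trans (min_le_right _ _) (min_le_right _ _))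
  -- any m with dr h m ≥ 1 has negative value at n0
  have key : ∀ m : ℤ, 1 ≤ dr h m → h m + (n0 - m) * dr h m < 0 := by
    intro m hd
    have hmN : N < m := by
      by_contra hc
      have := hdrN m (by omega)
      omega
    by_cases hcase : m ≤ N₁
    · have h1 : h m ≤ h N₁ := hmono _ _ hcase
      have h2 : (n0 - m) * dr h m ≤ (n0 - m) * 1 :=
        mul_le_mul_of_nonpos_left hd (by omega)
      nlinarith
    · push_neg at hcase
      have hm1 : h m = ρ * m + σ := hlin m (by omega)
      have hm2 : h (m - 1) = ρ * (m - 1) + σ := hlin (m - 1) (by omega)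
      have hdm : dr h m = ρ := by simp only [dr]; rw [hm1, hm2]; ring
      rw [hm1, hdm]
      have h3 : ρ * n0 ≤ 1 * n0 := mul_le_mul_of_nonpos_right hρ1 (by omega)
      nlinarith
  -- ht n0 ≥ 0
  have hht0 : 0 ≤ ht n0 := by
    have := (hT n0).2 ⟨n0, le_refl _, rfl⟩
    rw [hN n0 hn0b] at this
    simp at this
    omega
  -- t n0 is finite
  have hne : t n0 ≠ ⊤ := by
    intro htop
    obtain ⟨m, hm1, hm2, hm3⟩ := (ht' n0).2.2 htop (N₁ + 1)
    have ha : h m = ρ * m + σ := hlin m (by omega)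
    have hb : h (m - 1) = ρ * (m - 1) + σ := hlin (m - 1) (by omega)
    have hdm : dr h m = ρ := by simp only [dr]; rw [ha, hb]; ring
    have := key m (by omega)
    omega
  obtain ⟨τ, hτ⟩ := WithTop.ne_top_iff_exists.mp hne
  obtain ⟨hτ1, hτ2⟩ := (ht' n0).2.1 τ hτ.symm
  have hdτ : dr h τ = 0 := by
    by_contra hc
    have h1 : 1 ≤ dr h τ := by have := hdr τ; omega
    have := key τ h1
    omega
  have hττ0 : τ0 ≤ τ := hmin τ ⟨n0, hτ.symm⟩
  -- τ is also a maximizer for ns, hence τ ≤ τ0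
  have h2 : (ns - τ0) * dr h τ0 ≤ 0 :=
    mul_nonpos_of_nonpos_of_nonneg (by omega) (hdr τ0)
  have h3 : h τ0 ≤ h τ := hmono _ _ hττ0
  have h4 : ht ns ≤ h τ := by omega
  have h5 : h τ ≤ ht ns := (hT ns).2 ⟨τ, by omega, by rw [hdτ]; ring⟩
  have h6 : ht ns = h τ + (ns - τ) * dr h τ := by rw [hdτ]; omega
  have hcmp := (ht' ns).1 τ (by omega) h6
  rw [hns] at hcmp
  have h7 : τ ≤ τ0 := WithTop.coe_le_coe.mp hcmp
  have : τ = τ0 := le_antisymm h7 hττ0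
  rw [← this]
  exact hdτ

/-- the zeroth WHN graded piece h_0 is a torsion (rank 0) FDH
function, and vanishes identically if h is torsion-free. -/
theorem piece_zero_torsion (h ht : ℤ → ℤ) (t : ℤ → WithTop ℤ)
    (hF : IsFDH h) (hT : TildeSpec h ht) (ht' : TSpec h ht t)
    (τ0 : ℤ) (hv0 : ∃ n : ℤ, t n = (τ0 : WithTop ℤ))
    (hmin : ∀ τ : ℤ, (∃ n : ℤ, t n = (τ : WithTop ℤ)) → τ0 ≤ τ) :
    IsFDH (fun n => if n ≤ τ0 then h n else h τ0 + (n - τ0) * dr h τ0) ∧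
    (∃ c N : ℤ, ∀ n : ℤ, N ≤ n →
      (if n ≤ τ0 then h n else h τ0 + (n - τ0) * dr h τ0) = c) ∧
    (TorsionFree h → ∀ n : ℤ,
      (if n ≤ τ0 then h n else h τ0 + (n - τ0) * dr h τ0) = 0) := by
  have hdr0 : dr h τ0 = 0 := r_tau0_zero h ht t hF hT ht' τ0 hv0 hmin
  obtain ⟨hpos, hdr, ⟨N, hN⟩, -⟩ := hF
  refine ⟨⟨?_, ?_, ?_, ?_⟩, ?_, ?_⟩
  · -- nonneg
    intro n
    by_cases hn : n ≤ τ0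
    · simpa [hn] using hpos n
    · simp only [hn, if_false, hdr0]
      have := hpos τ0
      omega
  · -- differences nonneg
    intro n
    show 0 ≤ (if n ≤ τ0 then h n else h τ0 + (n - τ0) * dr h τ0) -
        (if n - 1 ≤ τ0 then h (n - 1) else h τ0 + (n - 1 - τ0) * dr h τ0)
    rw [hdr0]
    split_ifs with h1 h2 h2
    · have := hdr n
      simp only [dr] at this
      omega
    · omega
    · have hn1 : n - 1 = τ0 := by omega
      rw [hn1]
      omega
    · omega
  · -- vanishes far left
    refine ⟨min N τ0, fun n hn => ?_⟩
    have h1 : n ≤ τ0 := le_trans hn (min_le_right _ _)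
    simp only [h1, if_true]
    exact hN n (le_trans hn (min_le_left _ _))
  · -- eventually linear with ρ = 0
    refine ⟨0, h τ0, le_refl _, τ0 + 1, fun n hn => ?_⟩
    have h1 : ¬ n ≤ τ0 := by omega
    simp only [h1, if_false, hdr0]
    ring
  · -- eventually constant
    refine ⟨h τ0, τ0 + 1, fun n hn => ?_⟩
    have h1 : ¬ n ≤ τ0 := by omega
    simp only [h1, if_false, hdr0]
    ring
  · -- torsion-free implies zero
    intro hTF n
    have hdrall : ∀ m : ℤ, m ≤ τ0 → dr h m = 0 := by
      intro m hm
      by_contra hc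
      have h1 : 1 ≤ dr h m := by have := hdr m; omega
      have := hTF m τ0 hm h1
      omega
    have hz : ∀ k : ℤ, k ≤ τ0 → h k = 0 := by
      intro k hk
      by_cases hkN : k ≤ N
      · exact hN k hkN
      · have hstep : ∀ j : ℕ, N + (j : ℤ) ≤ τ0 → h (N + j) = 0 := by
          intro j
          induction j with
          | zero => intro _; simpa using hN N (le_refl _)
          | succ j ih =>
            intro hj
            have h1 := hdrall (N + j + 1) (by push_cast at hj ⊢; omega)
            simp only [dr] at h1
            rw [show N + (j : ℤ) + 1 - 1 = N + j by ring] at h1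
            have h2 := ih (by push_cast at hj ⊢; omega)
            push_cast
            rw [show N + ((j : ℤ) + 1) = N + j + 1 by ring]
            omega
        have h6 : k = N + ((k - N).toNat : ℤ) := by omega
        rw [h6]
        exact hstep _ (by omega)
    by_cases hn : n ≤ τ0
    · simp only [hn, if_true]
      exact hz n hn
    · simp only [hn, if_false, hdr0]
      rw [hz τ0 (le_refl _)]
      ring
end

section
/- Let h be an FDH function with graded pieces h₀, …, h_{s+1} of its WHN filtration at τ₀ < ⋯ < τ_s (distinct finite values of the maximizer function t). Then for i = 1, …, s+1 the function h_i is a torsion-free FDH function; explicitly, its first difference r_i(n) (which equals 0 for n ≤ τ_{i-1}, r(n) - r(τ_{i-1}) for τ_{i-1} < n ≤ τ_i, and r(τ_i) - r(τ_{i-1}) for n > τ_i) satisfies: r_i(m) ≥ 1 implies r_i(n) ≥ 1 for all n ≥ m. -/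
open Finset

lemma key_jump (h ht : ℤ → ℤ) (t : ℤ → WithTop ℤ)
    (hT : TildeSpec h ht) (ht' : TSpec h ht t)
    (τ n₀ : ℤ) (hn : t n₀ = (τ : WithTop ℤ)) :
    ∀ m : ℤ, τ < m → dr h τ + 1 ≤ dr h m := by
  obtain ⟨hn₀τ, hval⟩ := (ht' n₀).2.1 τ hn
  have strict : ∀ m : ℤ, τ < m →
      h m + (n₀ - m) * dr h m < h τ + (n₀ - τ) * dr h τ := by
    intro m hm
    have hmem : h m + (n₀ - m) * dr h m ∈
        {v : ℤ | ∃ m' : ℤ, n₀ ≤ m' ∧ v = h m' + (n₀ - m') * dr h m'} :=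
      ⟨m, by omega, rfl⟩
    have hle : h m + (n₀ - m) * dr h m ≤ ht n₀ := (hT n₀).2 hmem
    rcases lt_or_eq_of_le hle with hlt | heq
    · omega
    · have := (ht' n₀).1 m (by omega) heq.symm
      rw [hn] at this
      exact absurd (WithTop.coe_le_coe.mp this) (by omega)
  have main : ∀ m : ℤ, τ + 1 ≤ m →
      dr h τ + 1 ≤ dr h m ∧ h τ + (m - τ) * (dr h τ + 1) ≤ h m := by
    apply Int.le_induction
    ·
      have hs := strict (τ + 1) (by omega)
      have hd : dr h (τ + 1) = h (τ + 1) - h τ := by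
        unfold dr; ring_nf
      have h1b : dr h τ + 1 ≤ dr h (τ + 1) := by
        by_contra hc
        push_neg at hc
        nlinarith [hn₀τ]
      refine ⟨h1b, ?_⟩
      rw [show (τ + 1 - τ : ℤ) = 1 by ring, one_mul]
      linarith [hd, h1b]
    · intro m hm ih
      have hs := strict (m + 1) (by omega)
      have hd : dr h (m + 1) = h (m + 1) - h m := by
        unfold dr; ring_nf
      obtain ⟨ih1, ih2⟩ := ih
      have h1 : dr h τ + 1 ≤ dr h (m + 1) := by
        by_contra hc
        push_neg at hc
        nlinarith [hn₀τ]
      constructor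
      · exact h1
      · nlinarith
  intro m hm
  exact (main m (by omega)).1

/-- the WHN graded pieces h_i, i = 1, ..., s+1, are torsion-free:
their first differences r_i satisfy r_i m >= 1 implies r_i n >= 1 for n >= m.
The first conjunct treats pieces between consecutive finite values tau_{i-1} < tau_i
of t, the second the top piece beyond the largest finite value. -/
theorem pieces_torsion_free (h ht : ℤ → ℤ) (t : ℤ → WithTop ℤ)
    (hF : IsFDH h) (hT : TildeSpec h ht) (ht' : TSpec h ht t) :
    (∀ τprev τcur : ℤ,
      (∃ n : ℤ, t n = (τprev : WithTop ℤ)) → (∃ n : ℤ, t n = (τcur : WithTop ℤ)) →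
      τprev < τcur →
      (¬ ∃ n : ℤ, (τprev : WithTop ℤ) < t n ∧ t n < (τcur : WithTop ℤ)) →
      ∀ m n : ℤ, m ≤ n →
        1 ≤ (if m ≤ τprev then 0 else if m ≤ τcur then dr h m - dr h τprev
              else dr h τcur - dr h τprev) →
        1 ≤ (if n ≤ τprev then 0 else if n ≤ τcur then dr h n - dr h τprev
              else dr h τcur - dr h τprev)) ∧
    (∀ τtop : ℤ,
      (∃ n : ℤ, t n = (τtop : WithTop ℤ)) →
      (∀ τ : ℤ, (∃ n : ℤ, t n = (τ : WithTop ℤ)) → τ ≤ τtop) →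
      ∀ m n : ℤ, m ≤ n →
        1 ≤ (if m ≤ τtop then 0 else dr h m - dr h τtop) →
        1 ≤ (if n ≤ τtop then 0 else dr h n - dr h τtop)) := by
  constructor
  · rintro τprev τcur ⟨n₁, hn₁⟩ _ hlt _ m n hmn hm
    have key1 := key_jump h ht t hT ht' τprev n₁ hn₁
    have hmτ : τprev < m := by
      by_contra hc
      push_neg at hc
      rw [if_pos hc] at hm
      omega
    rw [if_neg (by omega : ¬ n ≤ τprev)]
    split_ifs with h2
    · have := key1 n (by omega); omega
    · have := key1 τcur (by omega); omega
  · rintro τtop ⟨n₁, hn₁⟩ _ m n hmn hm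
    have key1 := key_jump h ht t hT ht' τtop n₁ hn₁
    have hmτ : τtop < m := by
      by_contra hc
      push_neg at hc
      rw [if_pos hc] at hm
      omega
    rw [if_neg (by omega : ¬ n ≤ τtop)]
    have := key1 n (by omega); omega
end

section
/- Let h be a torsion-free FDH function of rank ρ with trivial WHN filtration (t takes exactly two values), with h(n) = ρ(n-ν)+β for n ≫ 0, 0 ≤ β < ρ, and let h^i = min(γ^i, (h - Σ_{k<i} γ^k)_+) be as in the canonical rank-one decomposition. Then each h^i is a torsion-free FDH function of rank 1; its degree is -ν for 1 ≤ i ≤ β and -ν-1 for β+1 ≤ i ≤ ρ. -/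
open Finset

/-- The function gamma^i of the canonical rank-one decomposition. -/
def gam (ν β i n : ℤ) : ℤ := if i ≤ β then max (n - ν + 1) 0 else max (n - ν) 0

/-- The rank-one piece h^i = min(gamma^i, (h - sum_{k<i} gamma^k)_+). -/
noncomputable def rkOnePiece (h : ℤ → ℤ) (ν β i n : ℤ) : ℤ :=
  min (gam ν β i n) (max (h n - ∑ k ∈ Finset.Icc 1 (i - 1), gam ν β k n) 0)

/-- t takes exactly two distinct values. -/
def TwoValues (t : ℤ → WithTop ℤ) : Prop :=
  ∃ v w : WithTop ℤ, v ≠ w ∧ (∃ n : ℤ, t n = v) ∧ (∃ n : ℤ, t n = w) ∧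
    ∀ n : ℤ, t n = v ∨ t n = w

/-!
Trivial WHN filtration pins `h̃` down. Since `t = ⊤` far to the right, its other value is a finite
`τ`, taken at every `n ≤ ν - 1` (where `t n = ⊤` would make `h̃ n = ρ (n - ν) + β` negative).
Letting `n → -∞` in `0 ≤ h̃ n = h τ + (n - τ) Δh(τ)` gives `Δh(τ) = 0`, and torsion-freeness
then gives `h τ = 0`; so `h̃ = 0` on `n ≤ ν - 1` and `h̃ ν ≤ β`. Hence `h = 0` below `ν`,
`h m ≤ (m - ν + 1) Δh(m)` and `h m ≤ (m - ν) Δh(m) + β`. These say that wherever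
`h - Σ_{k<i} γ^k` is positive, `Δh` exceeds the slope `i - 1` of the sum, so the difference is
strictly increasing from the point where it becomes positive. This property holds for `γ^i`, is
preserved by `(·)_+` and `min`, and for a nonnegative function it means monotone and torsion-free.
Far to the right `h^i = γ^i`.
-/

def StrictMonoAfterPos (f : ℤ → ℤ) : Prop := ∀ n, 0 < f (n - 1) → f (n - 1) < f n

namespace StrictMonoAfterPos

variable {f g : ℤ → ℤ}

theorem min (hf : StrictMonoAfterPos f) (hg : StrictMonoAfterPos g) :
    StrictMonoAfterPos fun n => min (f n) (g n) := fun n hn =>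
  min_lt_min (hf n (lt_min_iff.1 hn).1) (hg n (lt_min_iff.1 hn).2)

theorem max_zero (hf : StrictMonoAfterPos f) : StrictMonoAfterPos fun n => max (f n) 0 := by
  intro n (hn : 0 < max (f (n - 1)) 0)
  show max (f (n - 1)) 0 < max (f n) 0
  have := hf n (by omega)
  omega

theorem dr_nonneg (hf : StrictMonoAfterPos f) (hf0 : ∀ n, 0 ≤ f n) (n : ℤ) : 0 ≤ dr f n := by
  have := hf n
  have := hf0 n
  have := hf0 (n - 1)
  unfold dr
  omega

theorem one_le_dr (hf : StrictMonoAfterPos f) (hf0 : ∀ n, 0 ≤ f n) {n : ℤ} (hn : 0 < f n) :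
    1 ≤ dr f n := by
  have := hf n
  have := hf0 (n - 1)
  unfold dr
  omega

end StrictMonoAfterPos

theorem strictMonoAfterPos_gam (ν β i : ℤ) : StrictMonoAfterPos (gam ν β i) := by
  intro n
  unfold gam
  split_ifs <;> omega

theorem gam_eq_zero_of_le_pred {ν β i n : ℤ} (hn : n ≤ ν - 1) : gam ν β i n = 0 := by
  unfold gam
  split_ifs <;> omega

theorem sum_gam_eq_zero_of_le_pred {ν β j n : ℤ} (hn : n ≤ ν - 1) :
    ∑ k ∈ Icc 1 j, gam ν β k n = 0 :=
  sum_eq_zero fun _ _ => gam_eq_zero_of_le_pred hn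

theorem sum_gam_eq_of_le {ν β j n : ℤ} (hβ : 0 ≤ β) (hn : ν ≤ n) (hj : 0 ≤ j) :
    ∑ k ∈ Icc 1 j, gam ν β k n = j * (n - ν) + min j β := by
  induction j, hj using Int.leInduction with
  | base => simp [hβ]
  | succ j hj ih =>
    rw [← insert_Icc_right_eq_Icc_add_one (by omega), sum_insert (by simp), ih]
    unfold gam
    split_ifs <;> grind

theorem strictMonoAfterPos_sub_sum_gam {h : ℤ → ℤ} {ν β i : ℤ} (hβ : 0 ≤ β) (hi : 1 ≤ i)
    (hzero : ∀ n ≤ ν - 1, h n = 0)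
    (hA : ∀ m, ν - 1 ≤ m → h m ≤ (m - ν + 1) * dr h m)
    (hB : ∀ m, ν ≤ m → h m ≤ (m - ν) * dr h m + β) :
    StrictMonoAfterPos fun n => h n - ∑ k ∈ Icc 1 (i - 1), gam ν β k n := by
  intro n (hpos : 0 < h (n - 1) - ∑ k ∈ Icc 1 (i - 1), gam ν β k (n - 1))
  show h (n - 1) - ∑ k ∈ Icc 1 (i - 1), gam ν β k (n - 1) <
    h n - ∑ k ∈ Icc 1 (i - 1), gam ν β k n
  rcases lt_or_ge (n - 1) ν with hn | hn
  · rw [sum_gam_eq_zero_of_le_pred (by omega), hzero (n - 1) (by omega)] at hpos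
    omega
  rw [sum_gam_eq_of_le hβ hn (by omega)] at hpos ⊢
  rw [sum_gam_eq_of_le hβ (by omega) (by omega)]
  have hstep : h n = h (n - 1) + dr h n := by unfold dr; ring
  -- `h (n - 1)` lies above the sum, of slope `i - 1`, while `hA` or `hB` bounds it by `dr h n`
  -- times the same factor
  suffices i - 1 < dr h n by linarith
  rcases le_or_gt i β with hiβ | hiβ
  · rw [min_eq_left (by omega)] at hpos
    have := hA n (by omega)
    exact lt_of_mul_lt_mul_left (a := n - ν) (by linarith) (by omega)
  · rw [min_eq_right (by omega)] at hpos
    have := hB n (by omega)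
    exact lt_of_mul_lt_mul_left (a := n - 1 - ν) (by linarith) (by omega)

theorem rkOnePiece_nonneg (h : ℤ → ℤ) (ν β i n : ℤ) : 0 ≤ rkOnePiece h ν β i n :=
  le_min (by unfold gam; split_ifs <;> omega) (le_max_right _ _)

theorem rkOnePiece_eq_zero_of_le_pred (h : ℤ → ℤ) {ν β i n : ℤ} (hn : n ≤ ν - 1) :
    rkOnePiece h ν β i n = 0 :=
  le_antisymm (gam_eq_zero_of_le_pred hn ▸ min_le_left _ _) (rkOnePiece_nonneg h ν β i n)

theorem rkOnePiece_eq_of_le {h : ℤ → ℤ} {ρ ν β i N : ℤ} (hβ : 0 ≤ β) (hi : 1 ≤ i) (hiρ : i ≤ ρ)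
    (hN : ∀ n ≥ N, h n = ρ * (n - ν) + β) {n : ℤ} (hn : max N ν ≤ n) :
    rkOnePiece h ν β i n = if i ≤ β then n - ν + 1 else n - ν := by
  have hρi : 0 ≤ (ρ - i) * (n - ν) := mul_nonneg (by omega) (by omega)
  rw [rkOnePiece, hN n (by omega), sum_gam_eq_of_le hβ (by omega) (by omega), gam]
  split_ifs with hiβ
  · rw [min_eq_left (by omega : i - 1 ≤ β), max_eq_left (by omega : 0 ≤ n - ν + 1),
      min_eq_left (le_max_of_le_left (by linarith))]
  · rw [min_eq_right (by omega : β ≤ i - 1), max_eq_left (by omega : 0 ≤ n - ν),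
      min_eq_left (le_max_of_le_left (by linarith))]

theorem exists_one_le_dr_of_lt {h : ℤ → ℤ} {a b : ℤ} (hab : a ≤ b) (hlt : h a < h b) :
    ∃ m ≤ b, 1 ≤ dr h m := by
  induction b, hab using Int.leInduction with
  | base => exact absurd hlt (lt_irrefl _)
  | succ b _ ih =>
    by_cases hb : h a < h b
    · obtain ⟨m, hm, hdr⟩ := ih hb
      exact ⟨m, by omega, hdr⟩
    · refine ⟨b + 1, le_rfl, ?_⟩
      rw [dr, add_sub_cancel_right]
      omega

theorem TorsionFree.nonpos_of_dr_nonpos {h : ℤ → ℤ} (hTF : TorsionFree h)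
    (hvan : ∃ N, ∀ n ≤ N, h n = 0) {τ : ℤ} (hτ : dr h τ ≤ 0) : h τ ≤ 0 := by
  obtain ⟨N, hN⟩ := hvan
  by_contra! hpos
  have hlt : h (min N τ) < h τ := by rw [hN _ (min_le_left _ _)]; exact hpos
  obtain ⟨m, hm, hdr⟩ := exists_one_le_dr_of_lt (min_le_right _ _) hlt
  have := hTF m τ hm hdr
  omega

theorem TwoValues.exists_eq_top_or_eq_coe {t : ℤ → WithTop ℤ} (htwo : TwoValues t) {n₀ : ℤ}
    (htop : t n₀ = ⊤) : ∃ τ : ℤ, ∀ n, t n = ⊤ ∨ t n = τ := by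
  obtain ⟨v, w, hvw, -, -, hall⟩ := htwo
  wlog hv : v = ⊤ generalizing v w
  · have hw : w = ⊤ := by
      rcases hall n₀ with hn | hn <;> [exact absurd (hn ▸ htop) hv; rw [← hn, htop]]
    exact this w v hvw.symm (fun n => (hall n).symm) hw
  obtain ⟨τ, rfl⟩ := WithTop.ne_top_iff_exists.1 (hv ▸ hvw.symm)
  exact ⟨τ, fun n => hv ▸ hall n⟩

section TrivialFiltration

variable {h ht : ℤ → ℤ} {t : ℤ → WithTop ℤ} {ρ ν β N : ℤ}

theorem le_tilde (hT : TildeSpec h ht) {n m : ℤ} (hnm : n ≤ m) :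
    h m + (n - m) * dr h m ≤ ht n :=
  (hT n).2 ⟨m, hnm, rfl⟩

theorem self_le_tilde (hT : TildeSpec h ht) (n : ℤ) : h n ≤ ht n := by
  simpa using le_tilde hT (le_refl n)

theorem add_mul_dr_of_eventually_linear (hN : ∀ n ≥ N, h n = ρ * (n - ν) + β) {m : ℤ}
    (hm : N + 1 ≤ m) (n : ℤ) : h m + (n - m) * dr h m = ρ * (n - ν) + β := by
  rw [dr, hN m (by omega), hN (m - 1) (by omega)]
  ring

theorem tilde_eq_of_t_eq_top (ht' : TSpec h ht t) (hN : ∀ n ≥ N, h n = ρ * (n - ν) + β) {n : ℤ}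
    (htop : t n = ⊤) : ht n = ρ * (n - ν) + β := by
  obtain ⟨m, hm, -, hmax⟩ := (ht' n).2.2 htop (N + 1)
  rw [hmax, add_mul_dr_of_eventually_linear hN hm]

theorem t_eq_top_of_le (hT : TildeSpec h ht) (ht' : TSpec h ht t)
    (hN : ∀ n ≥ N, h n = ρ * (n - ν) + β) {n : ℤ} (hn : N + 1 ≤ n) : t n = ⊤ := by
  obtain ⟨m₀, hm₀, hmax⟩ := (hT n).1
  cases htn : t n with
  | top => rfl
  | coe τ =>
    -- every `m ≥ n` is a maximizer, in particular one beyond `τ`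
    have hτ := (ht' n).1 (max n (τ + 1)) (le_max_left _ _) (by
      rw [hmax, add_mul_dr_of_eventually_linear hN (by omega),
        add_mul_dr_of_eventually_linear hN (by omega)])
    rw [htn, WithTop.coe_le_coe] at hτ
    omega

theorem tilde_eq_zero_and_tilde_le (hF : IsFDH h) (hTF : TorsionFree h)
    (hT : TildeSpec h ht) (ht' : TSpec h ht t) (htwo : TwoValues t) (hβ0 : 0 ≤ β)
    (hβρ : β < ρ) (hN : ∀ n ≥ N, h n = ρ * (n - ν) + β) :
    (∀ n ≤ ν - 1, ht n = 0) ∧ ht ν ≤ β := by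
  obtain ⟨hpos, hr, hvan, -⟩ := hF
  obtain ⟨τ, hτ⟩ := htwo.exists_eq_top_or_eq_coe (t_eq_top_of_le hT ht' hN le_rfl)
  have hleft : ∀ n ≤ ν - 1, ht n = h τ + (n - τ) * dr h τ := by
    intro n hn
    refine ((ht' n).2.1 τ ((hτ n).resolve_left fun htop => ?_)).2
    have := tilde_eq_of_t_eq_top ht' hN htop
    have := self_le_tilde hT n
    have := hpos n
    nlinarith
  have hrτ : dr h τ = 0 := by
    refine le_antisymm ?_ (hr τ)
    by_contra! hrτ
    -- far enough to the left, the line through `(τ, h τ)` of slope `dr h τ ≥ 1` is negative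
    set n := min (ν - 1) (τ - h τ - 1)
    have hslope : (n - τ) * dr h τ ≤ (n - τ) * 1 :=
      mul_le_mul_of_nonpos_left hrτ (by have := hpos τ; omega)
    have := hleft n (min_le_left _ _)
    have := self_le_tilde hT n
    have := hpos n
    omega
  have hhτ : h τ = 0 := le_antisymm (hTF.nonpos_of_dr_nonpos hvan hrτ.le) (hpos τ)
  refine ⟨fun n hn => by rw [hleft n hn, hrτ, hhτ]; ring, ?_⟩
  rcases hτ ν with htop | hcoe
  · rw [tilde_eq_of_t_eq_top ht' hN htop]
    simp
  · rw [((ht' ν).2.1 τ hcoe).2, hrτ, hhτ]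
    simpa using hβ0

end TrivialFiltration

/-- each rank-one piece h^i is a torsion-free FDH function of rank 1
and degree -nu (for i <= beta) or -nu - 1 (for i > beta). -/
theorem pieces_rank_one (h ht : ℤ → ℤ) (t : ℤ → WithTop ℤ)
    (hF : IsFDH h) (hTF : TorsionFree h) (hT : TildeSpec h ht) (ht' : TSpec h ht t)
    (htwo : TwoValues t)
    (ρ ν β : ℤ) (hβ0 : 0 ≤ β) (hβρ : β < ρ)
    (hlin : ∃ N : ℤ, ∀ n ≥ N, h n = ρ * (n - ν) + β) :
    ∀ i : ℤ, 1 ≤ i → i ≤ ρ →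
      IsFDH (rkOnePiece h ν β i) ∧
      (∀ n : ℤ, 0 < rkOnePiece h ν β i n →
        1 ≤ rkOnePiece h ν β i n - rkOnePiece h ν β i (n - 1)) ∧
      (∃ N : ℤ, ∀ n ≥ N, rkOnePiece h ν β i n =
        if i ≤ β then n - ν + 1 else n - ν) := by
  intro i hi hiρ
  obtain ⟨N, hN⟩ := hlin
  obtain ⟨htilde_zero, htilde_le⟩ := tilde_eq_zero_and_tilde_le hF hTF hT ht' htwo hβ0 hβρ hN
  have hzero : ∀ n ≤ ν - 1, h n = 0 := fun n hn =>
    le_antisymm (htilde_zero n hn ▸ self_le_tilde hT n) (hF.1 n)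
  have hA : ∀ m, ν - 1 ≤ m → h m ≤ (m - ν + 1) * dr h m := fun m hm => by
    have := le_tilde hT hm
    rw [htilde_zero _ le_rfl] at this
    linarith
  have hB : ∀ m, ν ≤ m → h m ≤ (m - ν) * dr h m + β := fun m hm => by
    have := le_tilde hT hm
    linarith
  have hmono : StrictMonoAfterPos (rkOnePiece h ν β i) :=
    (strictMonoAfterPos_gam ν β i).min
      (strictMonoAfterPos_sub_sum_gam hβ0 hi hzero hA hB).max_zero
  have hnonneg := rkOnePiece_nonneg h ν β i
  refine ⟨⟨hnonneg, hmono.dr_nonneg hnonneg,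
      ⟨ν - 1, fun n hn => rkOnePiece_eq_zero_of_le_pred h hn⟩,
      1, if i ≤ β then 1 - ν else -ν, zero_le_one, max N ν, fun n hn => ?_⟩,
    fun n hn => hmono.one_le_dr hnonneg hn,
    max N ν, fun n hn => rkOnePiece_eq_of_le hβ0 hi hiρ hN hn⟩
  rw [rkOnePiece_eq_of_le hβ0 hi hiρ hN hn]
  split_ifs <;> ring
end

section
/- Let h be a torsion-free FDH function of rank ρ with trivial WHN filtration, h(n) = ρ(n-ν)+β for n ≫ 0 with 0 ≤ β < ρ, and rank-one pieces h^i as above. Then for 1 ≤ i ≤ β the deficiency of h^i, namely Σ_{n ∈ ℤ} ((n - ν + 1)_+ - h^i(n)), is strictly positive. -/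
/-! The deficiency sum has nonnegative terms and its term at `n = ν` is `1`, because `h ν = 0`.
For the latter: every `m` in the linear range is a maximizer far to the right, so `t = ⊤` there,
while for `n < ν` a maximizer in the linear range would give `h̃ n = ρ (n - ν) + β < 0`; hence
`t` is constantly some finite `τ` on `n < ν`. The tangent line of `h` at `τ` then stays
nonnegative on a left half-line, so it is horizontal, and torsion-freeness forces `h τ = 0`.
Finally `h̃ (ν - 1) = 0`, so `ν` is a maximizer at `ν - 1`, whence `ν ≤ τ` and `h ν ≤ h τ = 0`. -/

open Finset

lemma monotone_of_dr_nonneg {h : ℤ → ℤ} (hdr : ∀ n, 0 ≤ dr h n) : Monotone h :=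
  monotone_int_of_le_succ fun n ↦ by simpa [dr] using hdr (n + 1)

lemma eq_of_dr_eq_zero {h : ℤ → ℤ} {c : ℤ} (hz : ∀ m ≤ c, dr h m = 0) :
    ∀ m ≤ c, h m = h c := by
  intro m hm
  induction m, hm using Int.leInductionDown with
  | base => rfl
  | pred n hn ih => have := hz n hn; simp only [dr] at this; omega

lemma TorsionFree.dr_eq_zero_of_le {h : ℤ → ℤ} (hTF : TorsionFree h) (hdr : ∀ n, 0 ≤ dr h n)
    {τ : ℤ} (hτ : dr h τ = 0) {m : ℤ} (hm : m ≤ τ) : dr h m = 0 := by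
  by_contra hne
  have := hTF m τ hm (by have := hdr m; omega)
  omega

lemma slope_eq_zero_of_nonneg_on_Iic {a s c : ℤ} (hs : 0 ≤ s) (hpos : ∀ n ≤ c, 0 ≤ a + n * s) :
    s = 0 := by
  by_contra hne
  set n := min c (-|a| - 1)
  have hn : n ≤ -|a| - 1 := min_le_right _ _
  have := hpos n (min_le_left _ _)
  nlinarith [le_abs_self a, mul_le_mul_of_nonpos_left (show 1 ≤ s by omega) (show n ≤ 0 by
    linarith [abs_nonneg a])]

lemma TildeSpec.le {h ht : ℤ → ℤ} (hT : TildeSpec h ht) (n : ℤ) : h n ≤ ht n :=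
  (hT n).2 ⟨n, le_rfl, by ring⟩

lemma TSpec.eq_top_of_forall_ge {h ht : ℤ → ℤ} {t : ℤ → WithTop ℤ} (ht' : TSpec h ht t) {a : ℤ}
    (hmax : ∀ m ≥ a, ht a = h m + (a - m) * dr h m) : t a = ⊤ := by
  by_contra hne
  obtain ⟨τ, hτ⟩ := WithTop.ne_top_iff_exists.mp hne
  have := (ht' a).1 (max a (τ + 1)) (le_max_left _ _) (hmax _ (le_max_left _ _))
  rw [← hτ, WithTop.coe_le_coe] at this
  omega

lemma TwoValues.exists_forall_eq_coe {t : ℤ → WithTop ℤ} (htwo : TwoValues t) {a : ℤ}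
    (ha : t a = ⊤) : ∃ τ : ℤ, ∀ n, t n ≠ ⊤ → t n = τ := by
  obtain ⟨v, w, -, -, -, hall⟩ := htwo
  have key : ∀ u : WithTop ℤ, (∀ n, t n = ⊤ ∨ t n = u) → ∃ τ : ℤ, ∀ n, t n ≠ ⊤ → t n = τ := by
    intro u hu
    by_cases hut : u = ⊤
    · exact ⟨0, fun n hn ↦ absurd ((hu n).resolve_left hn ▸ hut) hn⟩
    · obtain ⟨τ, rfl⟩ := WithTop.ne_top_iff_exists.mp hut
      exact ⟨τ, fun n hn ↦ (hu n).resolve_left hn⟩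
  rcases hall a with hv | hw
  · exact key w fun n ↦ by rw [← ha, hv]; exact hall n
  · exact key v fun n ↦ by rw [← ha, hw]; exact (hall n).symm

lemma tangent_eq_of_eq_linear {h : ℤ → ℤ} {ρ ν β L : ℤ} (hL : ∀ n ≥ L, h n = ρ * (n - ν) + β)
    {m : ℤ} (hm : L + 1 ≤ m) (n : ℤ) : h m + (n - m) * dr h m = ρ * (n - ν) + β := by
  rw [dr, hL m (by omega), hL (m - 1) (by omega)]
  ring

lemma exists_t_eq_coe_of_lt {h ht : ℤ → ℤ} {t : ℤ → WithTop ℤ} (hpos : ∀ n, 0 ≤ h n)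
    (hT : TildeSpec h ht) (ht' : TSpec h ht t) (htwo : TwoValues t) {ρ ν β L : ℤ}
    (hβ0 : 0 ≤ β) (hβρ : β < ρ) (hL : ∀ n ≥ L, h n = ρ * (n - ν) + β) :
    ∃ τ : ℤ, ∀ n < ν, t n = τ := by
  have htop : t (L + 1) = ⊤ := by
    obtain ⟨m₀, hm₀, hv⟩ := (hT (L + 1)).1
    refine ht'.eq_top_of_forall_ge fun m hm ↦ ?_
    rw [hv, tangent_eq_of_eq_linear hL hm₀, tangent_eq_of_eq_linear hL hm]
  have hfin : ∀ n < ν, t n ≠ ⊤ := by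
    intro n hn htopn
    obtain ⟨m, hm, -, hv⟩ := (ht' n).2.2 htopn (L + 1)
    have : 0 ≤ ρ * (n - ν) + β := by
      rw [← tangent_eq_of_eq_linear hL hm, ← hv]
      exact (hpos n).trans (hT.le n)
    nlinarith
  obtain ⟨τ, hτ⟩ := htwo.exists_forall_eq_coe htop
  exact ⟨τ, fun n hn ↦ hτ n (hfin n hn)⟩

lemma eq_zero_and_dr_eq_zero_of_t_eq_coe {h ht : ℤ → ℤ} {t : ℤ → WithTop ℤ} (hF : IsFDH h)
    (hTF : TorsionFree h) (hT : TildeSpec h ht) (ht' : TSpec h ht t) {τ c : ℤ}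
    (hτ : ∀ n ≤ c, t n = τ) : h τ = 0 ∧ dr h τ = 0 := by
  obtain ⟨hpos, hdr, ⟨N, hN⟩, -⟩ := hF
  have hdrτ : dr h τ = 0 := by
    refine slope_eq_zero_of_nonneg_on_Iic (a := h τ - τ * dr h τ) (c := c) (hdr τ) fun n hn ↦ ?_
    have hv := ((ht' n).2.1 τ (hτ n hn)).2
    have := (hpos n).trans (hT.le n)
    linarith
  have hconst := eq_of_dr_eq_zero fun m hm ↦ hTF.dr_eq_zero_of_le hdr hdrτ hm
  refine ⟨?_, hdrτ⟩
  rw [← hconst (min N τ) (min_le_right _ _), hN _ (min_le_left _ _)]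

lemma eq_zero_at_nu {h ht : ℤ → ℤ} {t : ℤ → WithTop ℤ} (hF : IsFDH h) (hTF : TorsionFree h)
    (hT : TildeSpec h ht) (ht' : TSpec h ht t) (htwo : TwoValues t) {ρ ν β : ℤ}
    (hβ0 : 0 ≤ β) (hβρ : β < ρ) (hlin : ∃ N : ℤ, ∀ n ≥ N, h n = ρ * (n - ν) + β) :
    h ν = 0 := by
  obtain ⟨L, hL⟩ := hlin
  obtain ⟨τ, hτ⟩ := exists_t_eq_coe_of_lt hF.1 hT ht' htwo hβ0 hβρ hL
  obtain ⟨hτ0, hdrτ⟩ :=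
    eq_zero_and_dr_eq_zero_of_t_eq_coe hF hTF hT ht' (c := ν - 1) fun n hn ↦ hτ n (by omega)
  obtain ⟨-, hv⟩ := (ht' (ν - 1)).2.1 τ (hτ _ (by omega))
  rw [hτ0, hdrτ, mul_zero, add_zero] at hv
  have hprev : h (ν - 1) = 0 := le_antisymm (hv ▸ hT.le _) (hF.1 _)
  have hντ : ν ≤ τ := by
    have := (ht' (ν - 1)).1 ν (by omega) (by rw [hv, dr, hprev]; ring)
    rwa [hτ _ (by omega), WithTop.coe_le_coe] at this
  exact le_antisymm (hτ0 ▸ monotone_of_dr_nonneg hF.2.1 hντ) (hF.1 ν)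

lemma rkOnePiece_le {h : ℤ → ℤ} {ν β i : ℤ} (hi : i ≤ β) (n : ℤ) :
    rkOnePiece h ν β i n ≤ max (n - ν + 1) 0 := by
  simpa only [rkOnePiece, gam, if_pos hi] using min_le_left _ _

lemma gam_nonneg (ν β i n : ℤ) : 0 ≤ gam ν β i n := by
  unfold gam
  split_ifs <;> exact le_max_right _ _

lemma rkOnePiece_eq_zero {h : ℤ → ℤ} {n : ℤ} (hn : h n = 0) (ν β i : ℤ) :
    rkOnePiece h ν β i n = 0 := by
  have : 0 ≤ ∑ k ∈ Icc 1 (i - 1), gam ν β k n := sum_nonneg fun k _ ↦ gam_nonneg ν β k n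
  rw [rkOnePiece, hn, max_eq_right (by omega)]
  exact min_eq_right (gam_nonneg ν β i n)

/-- for 1 <= i <= beta the deficiency of h^i, the sum over all of ZZ
of ((n - nu + 1)_+ - h^i(n)) (all of whose terms outside [nu, N] vanish), is
strictly positive. -/
theorem pieces_deficiency_pos (h ht : ℤ → ℤ) (t : ℤ → WithTop ℤ)
    (hF : IsFDH h) (hTF : TorsionFree h) (hT : TildeSpec h ht) (ht' : TSpec h ht t)
    (htwo : TwoValues t)
    (ρ ν β : ℤ) (hβ0 : 0 ≤ β) (hβρ : β < ρ)
    (hlin : ∃ N : ℤ, ∀ n ≥ N, h n = ρ * (n - ν) + β) :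
    ∀ i : ℤ, 1 ≤ i → i ≤ β →
      ∀ N : ℤ, ν ≤ N → (∀ n ≥ N, rkOnePiece h ν β i n = n - ν + 1) →
        0 < ∑ n ∈ Finset.Icc ν N, (max (n - ν + 1) 0 - rkOnePiece h ν β i n) := by
  intro i _ hiβ N hN _
  refine sum_pos' (fun n _ ↦ sub_nonneg.mpr (rkOnePiece_le hiβ n)) ⟨ν, mem_Icc.mpr ⟨le_rfl, hN⟩, ?_⟩
  rw [rkOnePiece_eq_zero (eq_zero_at_nu hF hTF hT ht' htwo hβ0 hβρ hlin)]
  simp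
end
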